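/- arXiv:2509.03714 — 6 statements merged into one kernel-verified Lean document; each statement's English description precedes it below -/
import Mathlib

section
/- Let X be a real d×d matrix with ‖X‖ < 2π, where matrices carry a norm making them a Banach algebra (e.g. the L² operator norm). Then the series γ_u(X) := ∑_{k=0}^∞ (B'_k / k!)·X^k and γ_u(−X) := ∑_{k=0}^∞ (B'_k / k!)·(−X)^k are summable, and γ_u(X) = exp(X) · γ_u(−X), where exp is the matrix exponential. -/
/-!
In the ring of formal power series, `t/(eᵗ - 1) = ∑ B_k tᵏ/k!` and
`t eᵗ/(eᵗ - 1) = ∑ B'_k tᵏ/k!`, so cancelling `eᵗ - 1` gives `B'(t) = eᵗ · B(t)`.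
Since `B_k = (-1)ᵏ B'_k`, the series `γ_u(-X)` is `∑ B_k Xᵏ/k!`, and the Cauchy product of the
series for `exp X` and `γ_u(-X)` has exactly the coefficients of `eᵗ · B(t)`, i.e. it is `γ_u(X)`.
The Cauchy product is legitimate because all three series converge absolutely for `‖X‖ < 2π`:
Euler's formula `|B_{2m}|/(2m)! = 2 ζ(2m)/(2π)^{2m}` and `ζ(2m) ≤ ζ(2) < 2` bound the
coefficients by `4/(2π)ᵏ`.
-/

open scoped Matrix

attribute [local instance] Matrix.linftyOpNormedRing Matrix.linftyOpNormedAlgebra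

/-- The universal matrix `γ_u(X) := ∑_{k=0}^∞ (B'_k/k!)·X^k`, with `B'_k` the Bernoulli
numbers with convention `B'_1 = +1/2`. -/
noncomputable def gammaU {d : ℕ} (X : Matrix (Fin d) (Fin d) ℝ) : Matrix (Fin d) (Fin d) ℝ :=
  ∑' k : ℕ, ((bernoulli' k : ℝ) / (Nat.factorial k : ℝ)) • X ^ k

open Finset Real PowerSeries Nat

theorem bernoulli'PowerSeries_eq_exp_mul (A : Type*) [CommRing A] [Algebra ℚ A] [IsDomain A] :
    bernoulli'PowerSeries A = exp A * bernoulliPowerSeries A := by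
  have hexp : exp A - 1 ≠ 0 := fun h => by simpa using congr_arg (coeff 1) h
  refine mul_right_cancel₀ hexp ?_
  rw [bernoulli'PowerSeries_mul_exp_sub_one, mul_assoc, bernoulliPowerSeries_mul_exp_sub_one,
    mul_comm]

section Coefficients

variable {𝕜 : Type*} [Field 𝕜] [CharZero 𝕜]

theorem coeff_bernoulli'PowerSeries (n : ℕ) :
    coeff n (bernoulli'PowerSeries 𝕜) = bernoulli' n / n ! := by
  simp [bernoulli'PowerSeries]

theorem coeff_bernoulliPowerSeries_smul_pow {A : Type*} [Ring A] [Algebra 𝕜 A] (n : ℕ) (x : A) :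
    coeff n (bernoulliPowerSeries 𝕜) • x ^ n = ((bernoulli' n : 𝕜) / n !) • (-x) ^ n := by
  rw [← neg_one_smul 𝕜 x, smul_pow, smul_smul, bernoulli'_eq_bernoulli]
  rcases neg_one_pow_eq_or 𝕜 n with h | h <;> simp [bernoulliPowerSeries, h, neg_div]

theorem coeff_exp_eq_inv_factorial (n : ℕ) : coeff n (exp 𝕜) = (n ! : 𝕜)⁻¹ := by
  simp [coeff_exp]

end Coefficients

theorem abs_bernoulli_two_mul_div_factorial_le {m : ℕ} (hm : m ≠ 0) :
    |(bernoulli (2 * m) : ℝ) / (2 * m)!| ≤ π ^ 2 / 3 / (2 * π) ^ (2 * m) := by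
  have hterm (n : ℕ) : 1 / (n : ℝ) ^ (2 * m) ≤ 1 / (n : ℝ) ^ 2 := by
    rcases n.eq_zero_or_pos with rfl | hn
    · simp [hm]
    · gcongr
      · exact_mod_cast hn
      · omega
  have hζ := hasSum_zeta_nat hm
  have hζ_le := hasSum_le hterm hζ hasSum_zeta_two
  have hpow : (2 : ℝ) ^ (2 * m) = 2 * 2 ^ (2 * m - 1) := by
    rw [← pow_succ' (2 : ℝ), Nat.sub_add_cancel (by omega)]
  have key : |(bernoulli (2 * m) : ℝ) / (2 * m)!| * (2 * π) ^ (2 * m) =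
      2 * |(-1 : ℝ) ^ (m + 1) * 2 ^ (2 * m - 1) * π ^ (2 * m) * bernoulli (2 * m) / (2 * m)!| := by
    rw [mul_pow, hpow, abs_div, abs_div, abs_mul, abs_mul, abs_mul, abs_pow, abs_neg, abs_one,
      one_pow, abs_of_pos (by positivity : (0 : ℝ) < 2 ^ (2 * m - 1)),
      abs_of_pos (by positivity : (0 : ℝ) < π ^ (2 * m))]
    ring
  rw [le_div_iff₀ (by positivity), key, abs_of_nonneg (hζ.nonneg fun n => by positivity)]
  linarith

theorem abs_bernoulli'_div_factorial_le (k : ℕ) :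
    |(bernoulli' k : ℝ) / k !| ≤ 4 / (2 * π) ^ k := by
  rcases k.even_or_odd' with ⟨m, rfl | rfl⟩
  · rcases eq_or_ne m 0 with rfl | hm
    · norm_num
    rw [← bernoulli_eq_bernoulli'_of_ne_one (by omega)]
    refine (abs_bernoulli_two_mul_div_factorial_le hm).trans ?_
    gcongr
    nlinarith [pi_lt_d2, pi_pos]
  · rcases eq_or_ne m 0 with rfl | hm
    · norm_num [bernoulli'_one]
      rw [le_div_iff₀ (by positivity)]
      linarith [pi_lt_d2]
    · rw [bernoulli'_eq_zero_of_odd (odd_two_mul_add_one m) (by omega)]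
      simp only [Rat.cast_zero, zero_div, abs_zero]
      positivity

section PowerSeriesInBanachAlgebra

variable {𝕜 A : Type*} [NormedField 𝕜] [NormedRing A]

theorem summable_norm_smul_pow_of_norm_le [NormedSpace 𝕜 A] {c : ℕ → 𝕜} {C R : ℝ}
    (hc : ∀ k, ‖c k‖ ≤ C / R ^ k) {x : A} (hx : ‖x‖ < R) :
    Summable fun k => ‖c k • x ^ k‖ := by
  have hR : 0 < R := (norm_nonneg x).trans_lt hx
  have hgeom : Summable fun k => C * (‖x‖ / R) ^ (k + 1) :=
    (summable_nat_add_iff 1).mpr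
      ((summable_geometric_of_lt_one (by positivity) ((div_lt_one hR).mpr hx)).mul_left C)
  -- `‖x ^ 0‖ = ‖1‖` need not be `1`, so compare only from `k = 1` on
  refine (summable_nat_add_iff 1).mp (hgeom.of_nonneg_of_le (fun _ => norm_nonneg _) fun k => ?_)
  calc ‖c (k + 1) • x ^ (k + 1)‖ ≤ ‖c (k + 1)‖ * ‖x‖ ^ (k + 1) :=
        (norm_smul_le _ _).trans (by gcongr; exact norm_pow_le' x k.succ_pos)
    _ ≤ C / R ^ (k + 1) * ‖x‖ ^ (k + 1) := by gcongr; exact hc _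
    _ = C * (‖x‖ / R) ^ (k + 1) := by rw [div_pow]; ring

theorem tsum_coeff_smul_pow_mul_tsum [NormedAlgebra 𝕜 A] [CompleteSpace A] {f g : 𝕜⟦X⟧} {x : A}
    (hf : Summable fun n => ‖coeff n f • x ^ n‖) (hg : Summable fun n => ‖coeff n g • x ^ n‖) :
    (∑' n, coeff n f • x ^ n) * (∑' n, coeff n g • x ^ n) = ∑' n, coeff n (f * g) • x ^ n := by
  rw [tsum_mul_tsum_eq_tsum_sum_antidiagonal_of_summable_norm hf hg]
  refine tsum_congr fun n => ?_
  rw [coeff_mul, sum_smul]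
  refine sum_congr rfl fun kl hkl => ?_
  rw [smul_mul_smul_comm, ← pow_add, mem_antidiagonal.mp hkl]

end PowerSeriesInBanachAlgebra

/-- For `‖X‖ < 2π` the series defining `γ_u(X)` and `γ_u(−X)` are summable, and
`γ_u(X) = exp(X) · γ_u(−X)`. -/
theorem gammaU_eq_exp_mul_gammaU_neg {d : ℕ} (X : Matrix (Fin d) (Fin d) ℝ)
    (hX : ‖X‖ < 2 * Real.pi) :
    Summable (fun k : ℕ => ((bernoulli' k : ℝ) / (Nat.factorial k : ℝ)) • X ^ k) ∧
    Summable (fun k : ℕ => ((bernoulli' k : ℝ) / (Nat.factorial k : ℝ)) • (-X) ^ k) ∧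
    gammaU X = NormedSpace.exp X * gammaU (-X) := by
  have hsum {Y : Matrix (Fin d) (Fin d) ℝ} (hY : ‖Y‖ < 2 * π) :
      Summable fun k => ‖((bernoulli' k : ℝ) / k !) • Y ^ k‖ :=
    summable_norm_smul_pow_of_norm_le abs_bernoulli'_div_factorial_le hY
  have hsum_neg := hsum (Y := -X) (by rwa [norm_neg])
  refine ⟨(hsum hX).of_norm, hsum_neg.of_norm, ?_⟩
  have hγ : gammaU X = ∑' n, coeff n (bernoulli'PowerSeries ℝ) • X ^ n := by
    simp only [gammaU, coeff_bernoulli'PowerSeries]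
  have hγ_neg : gammaU (-X) = ∑' n, coeff n (bernoulliPowerSeries ℝ) • X ^ n := by
    simp only [gammaU, coeff_bernoulliPowerSeries_smul_pow]
  have hexp : NormedSpace.exp X = ∑' n, coeff n (exp ℝ) • X ^ n := by
    simp only [NormedSpace.exp_eq_tsum ℝ, coeff_exp_eq_inv_factorial]
  rw [hγ, hγ_neg, hexp, bernoulli'PowerSeries_eq_exp_mul]
  refine (tsum_coeff_smul_pow_mul_tsum ?_ ?_).symm
  · simpa only [coeff_exp_eq_inv_factorial] using NormedSpace.norm_expSeries_summable' (𝕂 := ℝ) X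
  · simpa only [coeff_bernoulliPowerSeries_smul_pow] using hsum_neg
end

section
/- Let C : Fin d → Fin d → Fin d → ℝ be antisymmetric in its two upper indices. Let Ã : (Fin d → ℝ) → (Fin d → ℝ) be differentiable at a point A, with Jacobian matrix J given by J^ξ_μ := ∂Ã_ξ/∂A_μ (row index ξ, column index μ), and assume J is invertible. Let B be the matrix B^μ_ν := Σ_σ C^{σμ}_ν·(Ã(A))_σ, assume ‖B‖ < 2π and that γ_u(−B) is invertible. Define γ := γ_u(B)·(J⁻¹)ᵀ and ρ := Jᵀ·(γ_u(−B))⁻¹. Then (det(γ·ρ))⁻¹ = exp(Σ_{μ,σ} C^{μσ}_μ·(Ã(A))_σ). -/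
open scoped Matrix

attribute [local instance] Matrix.linftyOpNormedRing Matrix.linftyOpNormedAlgebra

/-!
As power series, `γ_u(X) = X / (1 - e^{-X})` and `γ_u(-X) = X / (e^X - 1)`, so
`e^X γ_u(-X) = γ_u(X)`. For matrices this is a Cauchy product of two absolutely convergent
series: Euler's formula for `ζ(2m)` bounds `|B_k| / k!` by `4 / (2π)^k`, which is where
`‖B‖ < 2π` enters. Hence the Jacobians cancel and `γρ = γ_u(B) γ_u(-B)⁻¹ = e^B`.
Jacobi's formula `(det e^{tB})' = tr B · det e^{tB}` gives `det e^B = e^{tr B}`, and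
antisymmetry of `C` gives `tr B = -C^{μσ}_μ Ã_σ`.
-/

open Finset Nat NormedSpace
open scoped Real

theorem exp_mul_bernoulliPowerSeries :
    PowerSeries.exp ℚ * bernoulliPowerSeries ℚ = bernoulli'PowerSeries ℚ := by
  have hne : PowerSeries.exp ℚ - 1 ≠ 0 := fun h => by
    simpa using congrArg (PowerSeries.coeff 1) h
  refine mul_right_cancel₀ hne ?_
  rw [mul_assoc, bernoulliPowerSeries_mul_exp_sub_one, bernoulli'PowerSeries_mul_exp_sub_one,
    mul_comm]

theorem sum_antidiagonal_inv_factorial_mul_bernoulli (n : ℕ) :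
    ∑ p ∈ antidiagonal n, (p.1 ! : ℚ)⁻¹ * (bernoulli p.2 / p.2 !) = bernoulli' n / n ! := by
  simpa [PowerSeries.coeff_mul, bernoulliPowerSeries, bernoulli'PowerSeries] using
    congrArg (PowerSeries.coeff n) exp_mul_bernoulliPowerSeries

theorem tsum_one_div_nat_pow_two_mul_le_two {m : ℕ} (hm : m ≠ 0) :
    ∑' n : ℕ, 1 / (n : ℝ) ^ (2 * m) ≤ 2 := by
  have hle : ∀ n : ℕ, 1 / (n : ℝ) ^ (2 * m) ≤ 1 / (n : ℝ) ^ 2 := by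
    intro n
    rcases n.eq_zero_or_pos with rfl | hn
    · simp [hm]
    · exact one_div_le_one_div_of_le (by positivity)
        (pow_le_pow_right₀ (mod_cast hn) (by omega))
  calc ∑' n : ℕ, 1 / (n : ℝ) ^ (2 * m) ≤ π ^ 2 / 6 :=
        hasSum_le hle (hasSum_zeta_nat hm).summable.hasSum hasSum_zeta_two
    _ ≤ 2 := by nlinarith [Real.pi_lt_d2, Real.pi_pos]

theorem abs_bernoulli_div_factorial_mul_two_pi_pow_le (k : ℕ) :
    |(bernoulli k : ℝ) / k !| * (2 * π) ^ k ≤ 4 := by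
  rcases k.even_or_odd with ⟨m, rfl⟩ | hodd
  · rcases eq_or_ne m 0 with rfl | hm
    · norm_num
    rw [← two_mul]
    set Z := ∑' n : ℕ, 1 / (n : ℝ) ^ (2 * m)
    have hZ : Z = _ := (hasSum_zeta_nat hm).tsum_eq
    have hpow : (2 * π) ^ (2 * m) = 2 * (2 ^ (2 * m - 1) * π ^ (2 * m)) := by
      obtain ⟨j, rfl⟩ : ∃ j, m = j + 1 := ⟨m - 1, by omega⟩
      rw [show 2 * (j + 1) - 1 = 2 * j + 1 by omega]
      ring
    calc |(bernoulli (2 * m) : ℝ) / (2 * m)!| * (2 * π) ^ (2 * m) = 2 * |Z| := by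
          rw [hpow, hZ]
          simp only [abs_div, abs_mul, abs_pow, abs_neg, abs_one, one_pow, abs_two,
            abs_of_pos Real.pi_pos]
          ring
      _ = 2 * Z := by rw [abs_of_nonneg (tsum_nonneg fun n => by positivity)]
      _ ≤ 4 := by linarith [tsum_one_div_nat_pow_two_mul_le_two hm]
  · rcases eq_or_ne k 1 with rfl | hk
    · norm_num
      nlinarith [Real.pi_lt_d2]
    · rw [bernoulli_eq_zero_of_odd hodd (by obtain ⟨j, rfl⟩ := hodd; omega)]
      norm_num

section BanachAlgebra

variable {𝔸 : Type*} [NormedRing 𝔸] [NormedAlgebra ℝ 𝔸]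

theorem summable_norm_bernoulli_div_factorial_smul_pow {x : 𝔸} (hx : ‖x‖ < 2 * π) :
    Summable fun k : ℕ => ‖((bernoulli k : ℝ) / k !) • x ^ k‖ := by
  have hr : ‖x‖ / (2 * π) < 1 := (div_lt_one (by positivity)).mpr hx
  have hgeom : Summable fun k : ℕ => 4 * (‖x‖ / (2 * π)) ^ (k + 1) :=
    ((summable_geometric_of_lt_one (by positivity) hr).mul_left 4).comp_injective
      (add_left_injective 1)
  rw [← summable_nat_add_iff 1]
  refine hgeom.of_nonneg_of_le (fun k => norm_nonneg _) fun k => ?_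
  have hb := abs_bernoulli_div_factorial_mul_two_pi_pow_le (k + 1)
  calc ‖((bernoulli (k + 1) : ℝ) / (k + 1)!) • x ^ (k + 1)‖
      ≤ |(bernoulli (k + 1) : ℝ) / (k + 1)!| * ‖x‖ ^ (k + 1) := by
        rw [norm_smul, Real.norm_eq_abs]
        gcongr
        exact norm_pow_le' x k.succ_pos
    _ ≤ 4 * (‖x‖ / (2 * π)) ^ (k + 1) := by
        rw [div_pow, mul_div, le_div_iff₀ (by positivity)]
        calc _ = |(bernoulli (k + 1) : ℝ) / (k + 1)!| * (2 * π) ^ (k + 1) * ‖x‖ ^ (k + 1) := by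
              ring
          _ ≤ _ := by gcongr

/-- As generating functions: `e^x · x / (e^x - 1) = x / (1 - e^{-x})`. -/
theorem exp_mul_tsum_bernoulli_div_factorial_smul_pow [CompleteSpace 𝔸] {x : 𝔸}
    (hx : ‖x‖ < 2 * π) :
    exp x * ∑' k : ℕ, ((bernoulli k : ℝ) / k !) • x ^ k
      = ∑' k : ℕ, ((bernoulli' k : ℝ) / k !) • x ^ k := by
  have hexp : Summable fun k : ℕ => ‖(k !⁻¹ : ℝ) • x ^ k‖ := norm_expSeries_summable' x
  rw [exp_eq_tsum ℝ, tsum_mul_tsum_eq_tsum_sum_antidiagonal_of_summable_norm hexp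
    (summable_norm_bernoulli_div_factorial_smul_pow hx)]
  refine tsum_congr fun n => ?_
  have hcoeff : ((bernoulli' n : ℝ) / n !)
      = ∑ p ∈ antidiagonal n, (p.1 ! : ℝ)⁻¹ * ((bernoulli p.2 : ℝ) / p.2 !) := by
    have h := congrArg (Rat.cast : ℚ → ℝ) (sum_antidiagonal_inv_factorial_mul_bernoulli n)
    push_cast at h
    exact h.symm
  rw [hcoeff, sum_smul]
  refine sum_congr rfl fun p hp => ?_
  rw [smul_mul_smul_comm, ← pow_add, mem_antidiagonal.mp hp]

end BanachAlgebra

namespace Matrix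

variable {n : Type*} [Fintype n] [DecidableEq n]

theorem sum_det_updateRow_mul {R : Type*} [CommRing R] (A M : Matrix n n R) :
    ∑ i, (M.updateRow i ((A * M) i)).det = A.trace * M.det := by
  have hrow : ∀ i, (A * M) i = ∑ k, A i k • M k := fun i => by
    ext j
    simp [mul_apply, Finset.sum_apply]
  simp only [hrow, det_updateRow_sum, trace, diag, smul_eq_mul, Finset.sum_mul]

theorem _root_.HasDerivAt.det {f : ℝ → Matrix n n ℝ} {f' : Matrix n n ℝ} {t : ℝ}
    (hf : HasDerivAt f f' t) :
    HasDerivAt (fun s => (f s).det) (∑ i, ((f t).updateRow i (f' i)).det) t := by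
  let D : ContinuousMultilinearMap ℝ (fun _ : n => n → ℝ) ℝ :=
    { detRowAlternating.toMultilinearMap with
      cont := continuous_id.matrix_det }
  let rows : Matrix n n ℝ →L[ℝ] (n → n → ℝ) :=
    LinearMap.toContinuousLinearMap (ofLinearEquiv ℝ).symm.toLinearMap
  have h : HasDerivAt (fun s => (f s).det) (D.linearDeriv (rows (f t)) (rows f')) t :=
    (D.hasFDerivAt _).comp_hasDerivAt t (rows.hasFDerivAt.comp_hasDerivAt t hf)
  rwa [ContinuousMultilinearMap.linearDeriv_apply] at h

theorem det_exp (B : Matrix n n ℝ) : (exp B).det = Real.exp B.trace := by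
  have hderiv (t : ℝ) : HasDerivAt (fun s : ℝ => (exp (s • B)).det)
      (B.trace * (exp (t • B)).det) t := by
    rw [← sum_det_updateRow_mul]
    exact (hasDerivAt_exp_smul_const' B t).det
  have hconst (t : ℝ) :
      HasDerivAt (fun s : ℝ => Real.exp (-(s * B.trace)) * (exp (s • B)).det) 0 t := by
    have hexp : HasDerivAt (fun s : ℝ => Real.exp (-(s * B.trace)))
        (Real.exp (-(t * B.trace)) * -B.trace) t :=
      (hasDerivAt_mul_const B.trace).neg.exp
    refine (hexp.mul (hderiv t)).congr_deriv ?_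
    ring
  have h := is_const_of_deriv_eq_zero (fun t => (hconst t).differentiableAt)
    (fun t => (hconst t).deriv) 1 0
  simp only [one_mul, one_smul, zero_mul, neg_zero, Real.exp_zero, zero_smul, exp_zero, det_one,
    mul_one, Real.exp_neg] at h
  rw [inv_mul_eq_one₀ (Real.exp_ne_zero _)] at h
  exact h.symm

end Matrix

theorem gammaU_neg {d : ℕ} (X : Matrix (Fin d) (Fin d) ℝ) :
    gammaU (-X) = ∑' k : ℕ, ((bernoulli k : ℝ) / k !) • X ^ k := by
  refine tsum_congr fun k => ?_
  rw [← neg_one_smul ℝ X, smul_pow, smul_smul, bernoulli]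
  congr 1
  push_cast
  ring

theorem exp_mul_gammaU_neg {d : ℕ} {X : Matrix (Fin d) (Fin d) ℝ} (hX : ‖X‖ < 2 * π) :
    exp X * gammaU (-X) = gammaU X := by
  rw [gammaU_neg]
  exact exp_mul_tsum_bernoulli_div_factorial_smul_pow hX

theorem integrating_factor_universal_equivalent_general {d : ℕ} (C : Fin d → Fin d → Fin d → ℝ)
    (hC : ∀ μ ν lam, C μ ν lam = - C ν μ lam)
    (Atil : (Fin d → ℝ) → (Fin d → ℝ)) (A : Fin d → ℝ)
    (J : Matrix (Fin d) (Fin d) ℝ)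
    (hJinv : IsUnit J)
    (B : Matrix (Fin d) (Fin d) ℝ)
    (hB : B = Matrix.of fun μ ν => ∑ σ, C σ μ ν * Atil A σ)
    (hnorm : ‖B‖ < 2 * Real.pi)
    (hinv : IsUnit (gammaU (-B)))
    (γ ρ : Matrix (Fin d) (Fin d) ℝ)
    (hγ : γ = gammaU B * (J⁻¹)ᵀ)
    (hρ : ρ = Jᵀ * (gammaU (-B))⁻¹) :
    ((γ * ρ).det)⁻¹ = Real.exp (∑ μ, ∑ σ, C μ σ μ * Atil A σ) := by
  have hγρ : γ * ρ = exp B := by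
    have hJdet : IsUnit Jᵀ.det := by rwa [Matrix.det_transpose, ← Matrix.isUnit_iff_isUnit_det]
    have hGdet : IsUnit (gammaU (-B)).det := (Matrix.isUnit_iff_isUnit_det _).mp hinv
    rw [hγ, hρ, Matrix.transpose_nonsing_inv, Matrix.mul_assoc,
      Matrix.nonsing_inv_mul_cancel_left (h := hJdet), ← exp_mul_gammaU_neg hnorm,
      Matrix.mul_nonsing_inv_cancel_right (h := hGdet)]
  have htrace : B.trace = -∑ μ, ∑ σ, C μ σ μ * Atil A σ := by
    simp only [hB, Matrix.trace, Matrix.diag_apply, Matrix.of_apply, ← sum_neg_distrib]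
    refine sum_congr rfl fun μ _ => sum_congr rfl fun σ _ => ?_
    rw [hC, neg_mul]
  rw [hγρ, Matrix.det_exp, htrace, Real.exp_neg, inv_inv]

/-- Proposition 1 (universal-equivalent realization): under a field redefinition
`A ↦ Ã(A)` with Jacobian `J`, the integrating factor `(det(γρ))⁻¹` for
`γ = γ_u(B)·(J⁻¹)ᵀ`, `ρ = Jᵀ·(γ_u(−B))⁻¹`, `B^μ_ν = Σ_σ C^{σμ}_ν Ã_σ(A)`,
equals `exp(C^{μσ}_μ Ã_σ(A))`. -/
theorem integrating_factor_universal_equivalent {d : ℕ} (C : Fin d → Fin d → Fin d → ℝ)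
    (hC : ∀ μ ν lam, C μ ν lam = - C ν μ lam)
    (Atil : (Fin d → ℝ) → (Fin d → ℝ)) (A : Fin d → ℝ)
    (hdiff : DifferentiableAt ℝ Atil A)
    (J : Matrix (Fin d) (Fin d) ℝ)
    (hJ : J = Matrix.of fun ξ μ => fderiv ℝ Atil A (Pi.single μ 1) ξ)
    (hJinv : IsUnit J)
    (B : Matrix (Fin d) (Fin d) ℝ)
    (hB : B = Matrix.of fun μ ν => ∑ σ, C σ μ ν * Atil A σ)
    (hnorm : ‖B‖ < 2 * Real.pi)
    (hinv : IsUnit (gammaU (-B)))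
    (γ ρ : Matrix (Fin d) (Fin d) ℝ)
    (hγ : γ = gammaU B * (J⁻¹)ᵀ)
    (hρ : ρ = Jᵀ * (gammaU (-B))⁻¹) :
    ((γ * ρ).det)⁻¹ = Real.exp (∑ μ, ∑ σ, C μ σ μ * Atil A σ) :=
  integrating_factor_universal_equivalent_general C hC Atil A J hJinv B hB hnorm hinv γ ρ hγ hρ
end

section
/- Let C : Fin d → Fin d → Fin d → ℝ be antisymmetric in its two upper indices and satisfy the Jacobi identity. Let t be the vector t^σ := Σ_ν C^{νσ}_ν. Then for every A : Fin d → ℝ, the matrix Â with entries Â^μ_ν := Σ_σ C^{σμ}_ν·A_σ satisfies Â.mulVec t = 0, and moreover (Â^k).mulVec t = 0 for every k ≥ 1. -/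
/-- The matrix `Â^μ_ν = Σ_σ C^{σμ}_ν A_σ` annihilates the modular vector
`t^σ = Σ_ν C^{νσ}_ν`, as do all its positive powers. -/
theorem Ahat_mulVec_modular_vector {d : ℕ} (C : Fin d → Fin d → Fin d → ℝ)
    (hC : ∀ μ ν lam, C μ ν lam = - C ν μ lam)
    (hJac : ∀ α ν β ξ, ∑ σ, (C ν σ α * C β ξ σ + C β σ α * C ξ ν σ + C ξ σ α * C ν β σ) = 0)
    (t : Fin d → ℝ) (ht : t = fun σ => ∑ ν, C ν σ ν)
    (A : Fin d → ℝ)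
    (Ahat : Matrix (Fin d) (Fin d) ℝ)
    (hAhat : Ahat = Matrix.of fun μ ν => ∑ σ, C σ μ ν * A σ) :
    Ahat.mulVec t = 0 ∧ ∀ k : ℕ, 1 ≤ k → (Ahat ^ k).mulVec t = 0 := by
  have key : ∀ ν β, ∑ σ, C ν β σ * t σ = 0 := by
    intro ν β
    have hsum : ∑ α, ∑ σ, (C ν σ α * C β α σ + C β σ α * C α ν σ + C α σ α * C ν β σ) = 0 :=
      Finset.sum_eq_zero fun α _ => hJac α ν β α
    have hsplit : (∑ α, ∑ σ, C ν σ α * C β α σ) + (∑ α, ∑ σ, C β σ α * C α ν σ)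
        + (∑ α, ∑ σ, C α σ α * C ν β σ) = 0 := by
      rw [← hsum]; simp [Finset.sum_add_distrib]
    have h12 : (∑ α, ∑ σ, C β σ α * C α ν σ) = - ∑ α, ∑ σ, C ν σ α * C β α σ := by
      rw [Finset.sum_comm]
      rw [← Finset.sum_neg_distrib]
      refine Finset.sum_congr rfl fun σ _ => ?_
      rw [← Finset.sum_neg_distrib]
      refine Finset.sum_congr rfl fun α _ => ?_
      rw [hC α ν σ]; ring
    have h3 : (∑ α, ∑ σ, C α σ α * C ν β σ) = ∑ σ, C ν β σ * t σ := by
      rw [Finset.sum_comm, ht]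
      refine Finset.sum_congr rfl fun σ _ => ?_
      rw [← Finset.sum_mul]; ring
    rw [h12, h3] at hsplit
    linarith
  have h1 : Ahat.mulVec t = 0 := by
    funext μ
    simp only [Matrix.mulVec, dotProduct, hAhat, Matrix.of_apply, Pi.zero_apply]
    have : ∑ ν, (∑ σ, C σ μ ν * A σ) * t ν = ∑ σ, A σ * ∑ ν, C σ μ ν * t ν := by
      simp_rw [Finset.sum_mul, Finset.mul_sum]
      rw [Finset.sum_comm]
      refine Finset.sum_congr rfl fun σ _ => Finset.sum_congr rfl fun ν _ => ?_
      ring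
    rw [this]
    simp [key]
  refine ⟨h1, fun k hk => ?_⟩
  obtain ⟨m, rfl⟩ := Nat.exists_eq_add_of_le hk
  rw [add_comm, pow_succ, ← Matrix.mulVec_mulVec, h1, Matrix.mulVec_zero]
end

section
/- Let C : Fin d → Fin d → Fin d → ℝ be antisymmetric in its two upper indices and satisfy the Jacobi identity, and let t^σ := Σ_ν C^{νσ}_ν. Let A : (Fin d → ℝ) → (Fin d → ℝ) and f : (Fin d → ℝ) → ℝ be differentiable, and fix x ∈ (Fin d → ℝ) with ‖Â(x)‖ < 2π, where Â(x)^μ_ν := Σ_σ C^{σμ}_ν·A_σ(x). Define M(y) := exp(Σ_σ t^σ·A_σ(y)), δA_μ(x) := Σ_ξ (γ_u(Â(x)))^ξ_μ·∂_ξ f(x) + {A_μ, f}(x), and δM(x) := M(x)·Σ_ξ t^ξ·δA_ξ(x). Then δM(x) = M(x)·Σ_σ t^σ·∂_σ f(x) + {M, f}(x). -/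
open scoped Matrix

attribute [local instance] Matrix.linftyOpNormedRing Matrix.linftyOpNormedAlgebra

/-- Partial derivative in the `μ`-th coordinate direction. -/
noncomputable def pd {d : ℕ} (μ : Fin d) (g : (Fin d → ℝ) → ℝ) (x : Fin d → ℝ) : ℝ :=
  fderiv ℝ g x (Pi.single μ 1)

/-- The Lie-algebra-type Poisson bracket `{g,h}(x) = Σ x_λ C^{μν}_λ ∂_μ g ∂_ν h`. -/
noncomputable def pb {d : ℕ} (C : Fin d → Fin d → Fin d → ℝ) (g h : (Fin d → ℝ) → ℝ)
    (x : Fin d → ℝ) : ℝ :=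
  ∑ lam, ∑ μ, ∑ ν, x lam * C μ ν lam * pd μ g x * pd ν h x

/-!
The vector `t^σ = Σ_ν C^{νσ}_ν` is the trace form `σ ↦ tr (ad e_σ)`, which vanishes on brackets;
hence `Â(x) t = 0`. As `B'_0 = 1`, every term of the series `γ_u(Â) t` but the first vanishes, so
`γ_u(Â) t = t` as soon as the series converges, which it does for `‖Â‖ < 2π` because
`|B'_k| / k! ≤ 4 / (2π)^k` (Euler's formula for `ζ(2m)` and `ζ(2m) ≤ ζ(2)`). Contracting `δA`
with `t` thus gives `t^σ ∂_σ f + t^ξ {A_ξ, f}`, and the chain rule `∂M = M t^ξ ∂A_ξ` together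
with the linearity of the bracket in its first slot turns `M t^ξ {A_ξ, f}` into `{M, f}`.
-/

open Real Finset
open scoped Nat

lemma hasSum_one_div_nat_pow_two_mul_abs_bernoulli {m : ℕ} (hm : m ≠ 0) :
    HasSum (fun n : ℕ => 1 / (n : ℝ) ^ (2 * m))
      (|(bernoulli (2 * m) : ℝ)| / (2 * m)! * (2 * π) ^ (2 * m) / 2) := by
  have h := hasSum_zeta_nat hm
  convert h using 1
  rw [← abs_of_nonneg (h.nonneg fun n => by positivity)]
  have h2 : (2 : ℝ) ^ (2 * m) = 2 * 2 ^ (2 * m - 1) := (mul_pow_sub_one (by omega) _).symm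
  simp only [abs_div, abs_mul, abs_pow, abs_neg, abs_one, one_pow, abs_two, Nat.abs_cast,
    abs_of_pos pi_pos, mul_pow, h2]
  ring

lemma abs_bernoulli'_div_factorial_mul_two_pi_pow_le (k : ℕ) :
    |(bernoulli' k : ℝ)| / k ! * (2 * π) ^ k ≤ 4 := by
  obtain ⟨m, rfl | rfl⟩ := Nat.even_or_odd' k
  · rcases eq_or_ne m 0 with rfl | hm
    · norm_num
    have hζ := hasSum_one_div_nat_pow_two_mul_abs_bernoulli hm
    have hζ_le : |(bernoulli (2 * m) : ℝ)| / (2 * m)! * (2 * π) ^ (2 * m) / 2 ≤ π ^ 2 / 6 := by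
      refine hasSum_le (fun n => ?_) hζ hasSum_zeta_two
      rcases eq_or_ne n 0 with rfl | hn
      · simp [hm]
      · exact one_div_le_one_div_of_le (by positivity)
          (pow_le_pow_right₀ (by exact_mod_cast Nat.one_le_iff_ne_zero.2 hn) (by omega))
    rw [← bernoulli_eq_bernoulli'_of_ne_one (by omega)]
    nlinarith [pi_lt_d2, pi_pos]
  · rcases eq_or_ne m 0 with rfl | hm
    · norm_num [bernoulli'_one]
      linarith [pi_le_four]
    · rw [bernoulli'_eq_zero_of_odd (odd_two_mul_add_one m) (by omega)]
      simp

lemma summable_smul_pow_of_abs_mul_pow_le {R : Type*} [NormedRing R] [NormedAlgebra ℝ R]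
    [CompleteSpace R] {a : ℕ → ℝ} {ρ K : ℝ} (ha : ∀ k, |a k| * ρ ^ k ≤ K) {x : R}
    (hx : ‖x‖ < ρ) : Summable fun k => a k • x ^ k := by
  have hρ : 0 < ρ := (norm_nonneg x).trans_lt hx
  have hgeo : Summable fun k => K * (‖x‖ / ρ) ^ k :=
    (summable_geometric_of_lt_one (by positivity) ((div_lt_one hρ).2 hx)).mul_left K
  refine .of_norm_bounded_eventually_nat hgeo (Filter.eventually_atTop.2 ⟨1, fun k hk => ?_⟩)
  calc ‖a k • x ^ k‖ ≤ |a k| * ‖x‖ ^ k :=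
        (norm_smul_le _ _).trans (mul_le_mul_of_nonneg_left (norm_pow_le' x hk) (abs_nonneg _))
    _ = |a k| * ρ ^ k * (‖x‖ / ρ) ^ k := by rw [div_pow]; field_simp
    _ ≤ K * (‖x‖ / ρ) ^ k := by gcongr; exact ha k

lemma tsum_smul_pow_mulVec_of_mulVec_eq_zero {n : Type*} [Fintype n] [DecidableEq n]
    {a : ℕ → ℝ} {X : Matrix n n ℝ} (hsum : Summable fun k => a k • X ^ k) {v : n → ℝ}
    (hv : X *ᵥ v = 0) : (∑' k, a k • X ^ k) *ᵥ v = a 0 • v := by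
  change Matrix.mulVec.addMonoidHomLeft v _ = _
  rw [hsum.map_tsum _ (continuous_id.matrix_mulVec continuous_const)]
  change ∑' k, (a k • X ^ k) *ᵥ v = a 0 • v
  refine (tsum_eq_single 0 fun k hk => ?_).trans
    (by rw [pow_zero, Matrix.smul_mulVec, Matrix.one_mulVec])
  obtain ⟨j, rfl⟩ := Nat.exists_eq_succ_of_ne_zero hk
  rw [Matrix.smul_mulVec, pow_succ, ← Matrix.mulVec_mulVec, hv, Matrix.mulVec_zero, smul_zero]

lemma gammaU_mulVec_eq_self_of_mulVec_eq_zero {d : ℕ} {X : Matrix (Fin d) (Fin d) ℝ}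
    (hX : ‖X‖ < 2 * π) {v : Fin d → ℝ} (hv : X *ᵥ v = 0) : gammaU X *ᵥ v = v := by
  have hsum := summable_smul_pow_of_abs_mul_pow_le (a := fun k => (bernoulli' k : ℝ) / k !)
    (fun k => by rw [abs_div, Nat.abs_cast]; exact abs_bernoulli'_div_factorial_mul_two_pi_pow_le k)
    hX
  rw [gammaU, tsum_smul_pow_mulVec_of_mulVec_eq_zero hsum hv]
  simp

section StructureConstants

variable {d : ℕ} (C : Fin d → Fin d → Fin d → ℝ)

lemma sum_mul_sum_diag_eq_zero (hC : ∀ μ ν lam, C μ ν lam = - C ν μ lam)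
    (hJac : ∀ α ν β ξ, ∑ σ, (C ν σ α * C β ξ σ + C β σ α * C ξ ν σ + C ξ σ α * C ν β σ) = 0)
    (a b : Fin d) : ∑ σ, C a b σ * ∑ ν, C ν σ ν = 0 := by
  -- Jacobi with `ν = α`, summed over `α`; the last two terms cancel by antisymmetry.
  have H : ∑ α, ∑ σ, (C α σ α * C a b σ + C a σ α * C b α σ + C b σ α * C α a σ) = 0 :=
    sum_eq_zero fun α _ => hJac α α a b
  simp only [sum_add_distrib] at H
  have H1 : ∑ α, ∑ σ, C α σ α * C a b σ = ∑ σ, C a b σ * ∑ ν, C ν σ ν := by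
    rw [sum_comm]
    simp only [mul_sum, mul_comm]
  have H2 : ∑ α, ∑ σ, C b σ α * C α a σ = - ∑ α, ∑ σ, C a σ α * C b α σ := by
    rw [sum_comm]
    simp only [← sum_neg_distrib]
    exact sum_congr rfl fun σ _ => sum_congr rfl fun α _ => by rw [hC α a σ]; ring
  linarith

lemma mulVec_eq_zero_of_sum_mul_eq_zero {t : Fin d → ℝ} (ht : ∀ a b, ∑ σ, C a b σ * t σ = 0)
    (a : Fin d → ℝ) : (Matrix.of fun μ ν => ∑ σ, C σ μ ν * a σ) *ᵥ t = 0 := by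
  funext μ
  simp only [Matrix.mulVec, dotProduct, Matrix.of_apply, sum_mul, Pi.zero_apply]
  rw [sum_comm]
  refine sum_eq_zero fun σ _ => ?_
  simpa [mul_right_comm _ (a σ), ← sum_mul] using Or.inl (ht σ μ)

end StructureConstants

section PoissonBracket

variable {d : ℕ} {x : Fin d → ℝ}

lemma pd_exp_comp {g : (Fin d → ℝ) → ℝ} (hg : DifferentiableAt ℝ g x) (μ : Fin d) :
    pd μ (fun y => exp (g y)) x = exp (g x) * pd μ g x := by
  rw [pd, fderiv_exp hg]
  rfl

lemma pd_sum_const_mul {ι : Type*} (s : Finset ι) (c : ι → ℝ) {g : ι → (Fin d → ℝ) → ℝ}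
    (hg : ∀ i, DifferentiableAt ℝ (g i) x) (μ : Fin d) :
    pd μ (fun y => ∑ i ∈ s, c i * g i y) x = ∑ i ∈ s, c i * pd μ (g i) x := by
  rw [pd, fderiv_fun_sum fun i _ => (hg i).const_mul (c i), FunLike.coe_sum, Finset.sum_apply]
  exact sum_congr rfl fun i _ => by rw [fderiv_const_mul (hg i)]; rfl

lemma pb_eq_sum_mul_of_pd_eq (C : Fin d → Fin d → Fin d → ℝ) {ι : Type*} (s : Finset ι)
    (c : ι → ℝ) {g : (Fin d → ℝ) → ℝ} {h : ι → (Fin d → ℝ) → ℝ}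
    (hg : ∀ μ, pd μ g x = ∑ i ∈ s, c i * pd μ (h i) x) (f : (Fin d → ℝ) → ℝ) :
    pb C g f x = ∑ i ∈ s, c i * pb C (h i) f x := by
  simp only [pb, hg, mul_sum, sum_mul]
  symm
  rw [sum_comm]
  refine sum_congr rfl fun lam _ => ?_
  rw [sum_comm]
  refine sum_congr rfl fun μ _ => ?_
  rw [sum_comm]
  exact sum_congr rfl fun ν _ => sum_congr rfl fun i _ => by ring

end PoissonBracket

theorem integrating_factor_variation_universal_general {d : ℕ} (C : Fin d → Fin d → Fin d → ℝ)
    (hC : ∀ μ ν lam, C μ ν lam = - C ν μ lam)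
    (hJac : ∀ α ν β ξ, ∑ σ, (C ν σ α * C β ξ σ + C β σ α * C ξ ν σ + C ξ σ α * C ν β σ) = 0)
    (t : Fin d → ℝ) (ht : t = fun σ => ∑ ν, C ν σ ν)
    (A : (Fin d → ℝ) → (Fin d → ℝ)) (f : (Fin d → ℝ) → ℝ)
    (hA : Differentiable ℝ A)
    (x : Fin d → ℝ)
    (Ahat : (Fin d → ℝ) → Matrix (Fin d) (Fin d) ℝ)
    (hAhat : ∀ y, Ahat y = Matrix.of fun μ ν => ∑ σ, C σ μ ν * A y σ)
    (hnorm : ‖Ahat x‖ < 2 * Real.pi)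
    (M : (Fin d → ℝ) → ℝ) (hM : ∀ y, M y = Real.exp (∑ σ, t σ * A y σ))
    (δA : Fin d → ℝ) (δM : ℝ)
    (hδA : ∀ μ, δA μ = (∑ ξ, (gammaU (Ahat x)) ξ μ * pd ξ f x) + pb C (fun y => A y μ) f x)
    (hδM : δM = M x * ∑ ξ, t ξ * δA ξ) :
    δM = M x * (∑ σ, t σ * pd σ f x) + pb C M f x := by
  have hAσ : ∀ σ, DifferentiableAt ℝ (fun y => A y σ) x := differentiableAt_pi.1 (hA x)
  have hγt : gammaU (Ahat x) *ᵥ t = t := by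
    refine gammaU_mulVec_eq_self_of_mulVec_eq_zero hnorm ?_
    rw [hAhat]
    exact mulVec_eq_zero_of_sum_mul_eq_zero C (ht ▸ sum_mul_sum_diag_eq_zero C hC hJac) _
  have hpdM : ∀ μ, pd μ M x = ∑ σ, M x * t σ * pd μ (fun y => A y σ) x := fun μ => by
    rw [funext hM, pd_exp_comp (DifferentiableAt.fun_sum fun σ _ => (hAσ σ).const_mul (t σ)),
      pd_sum_const_mul _ _ hAσ, mul_sum]
    simp only [mul_assoc]
  have hγ : ∑ ξ, t ξ * ∑ η, gammaU (Ahat x) η ξ * pd η f x = ∑ σ, t σ * pd σ f x := by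
    conv_rhs => rw [← hγt]
    simp only [Matrix.mulVec, dotProduct, mul_sum, sum_mul]
    rw [sum_comm]
    exact sum_congr rfl fun η _ => sum_congr rfl fun ξ _ => by ring
  rw [hδM, pb_eq_sum_mul_of_pd_eq C _ _ hpdM, ← hγ]
  simp only [hδA, mul_add, sum_add_distrib, mul_sum, mul_assoc]

/-- Proposition 2 (universal realization): the integrating factor `M = exp(t·A)`
transforms as `δM = M·t^σ ∂_σ f + {M,f}`. -/
theorem integrating_factor_variation_universal {d : ℕ} (C : Fin d → Fin d → Fin d → ℝ)
    (hC : ∀ μ ν lam, C μ ν lam = - C ν μ lam)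
    (hJac : ∀ α ν β ξ, ∑ σ, (C ν σ α * C β ξ σ + C β σ α * C ξ ν σ + C ξ σ α * C ν β σ) = 0)
    (t : Fin d → ℝ) (ht : t = fun σ => ∑ ν, C ν σ ν)
    (A : (Fin d → ℝ) → (Fin d → ℝ)) (f : (Fin d → ℝ) → ℝ)
    (hA : Differentiable ℝ A) (hf : Differentiable ℝ f)
    (x : Fin d → ℝ)
    (Ahat : (Fin d → ℝ) → Matrix (Fin d) (Fin d) ℝ)
    (hAhat : ∀ y, Ahat y = Matrix.of fun μ ν => ∑ σ, C σ μ ν * A y σ)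
    (hnorm : ‖Ahat x‖ < 2 * Real.pi)
    (M : (Fin d → ℝ) → ℝ) (hM : ∀ y, M y = Real.exp (∑ σ, t σ * A y σ))
    (δA : Fin d → ℝ) (δM : ℝ)
    (hδA : ∀ μ, δA μ = (∑ ξ, (gammaU (Ahat x)) ξ μ * pd ξ f x) + pb C (fun y => A y μ) f x)
    (hδM : δM = M x * ∑ ξ, t ξ * δA ξ) :
    δM = M x * (∑ σ, t σ * pd σ f x) + pb C M f x :=
  integrating_factor_variation_universal_general C hC hJac t ht A f hA x Ahat hAhat hnorm M hM δA δM
    hδA hδM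
end

section
/- Let C : Fin d → Fin d → Fin d → ℝ be antisymmetric in its two upper indices. Let g : (Fin d → ℝ) → ℝ be continuously differentiable and f : (Fin d → ℝ) → ℝ be twice continuously differentiable. Then for all x: Σ_{λ,μ,ν} x_λ·C^{μν}_λ·∂_μ g(x)·∂_ν f(x) = −g(x)·Σ_{ν,σ} C^{νσ}_ν·∂_σ f(x) + Σ_ν ∂_ν( y ↦ Σ_{ξ,σ} y_ξ·C^{νσ}_ξ·g(y)·∂_σ f(y) )(x). -/
open Finset

theorem Finset.sum_sum_mul_eq_zero_of_antisymm_of_symm {ι R : Type*} [Ring R] [NoZeroDivisors R]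
    [CharZero R] (s : Finset ι) {A S : ι → ι → R} (hA : ∀ i j, A i j = -A j i)
    (hS : ∀ i j, S i j = S j i) :
    ∑ i ∈ s, ∑ j ∈ s, A i j * S i j = 0 := by
  rw [← CharZero.eq_neg_self_iff]
  calc ∑ i ∈ s, ∑ j ∈ s, A i j * S i j = ∑ j ∈ s, ∑ i ∈ s, A i j * S i j := sum_comm
    _ = -∑ i ∈ s, ∑ j ∈ s, A i j * S i j := by
      simp only [← sum_neg_distrib, ← neg_mul]
      exact sum_congr rfl fun j _ => sum_congr rfl fun i _ => by rw [hA, hS]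

section PartialDerivative

variable {d : ℕ} {a b : (Fin d → ℝ) → ℝ} {x : Fin d → ℝ} (ν : Fin d)

theorem pd_fun_sum {ι : Type*} (s : Finset ι) {F : ι → (Fin d → ℝ) → ℝ}
    (hF : ∀ i ∈ s, DifferentiableAt ℝ (F i) x) :
    pd ν (fun y => ∑ i ∈ s, F i y) x = ∑ i ∈ s, pd ν (F i) x := by
  simp [pd, fderiv_fun_sum hF]

theorem pd_const_mul (c : ℝ) (ha : DifferentiableAt ℝ a x) :
    pd ν (fun y => c * a y) x = c * pd ν a x := by
  simp [pd, fderiv_const_mul ha]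

theorem pd_fun_sum_mul {ι : Type*} (s : Finset ι) (c : ι → ℝ) {F : ι → (Fin d → ℝ) → ℝ}
    (hF : ∀ i ∈ s, DifferentiableAt ℝ (F i) x) :
    pd ν (fun y => ∑ i ∈ s, c i * F i y) x = ∑ i ∈ s, c i * pd ν (F i) x := by
  rw [pd_fun_sum ν s fun i hi => (hF i hi).const_mul (c i)]
  exact sum_congr rfl fun i hi => pd_const_mul ν (c i) (hF i hi)

theorem pd_mul (ha : DifferentiableAt ℝ a x) (hb : DifferentiableAt ℝ b x) :
    pd ν (fun y => a y * b y) x = pd ν a x * b x + a x * pd ν b x := by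
  simp [pd, fderiv_fun_mul ha hb]
  ring

theorem pd_coord (ξ : Fin d) : pd ν (fun y => y ξ) x = if ξ = ν then 1 else 0 := by
  simp [pd, fderiv_apply, Pi.single_apply]

theorem pd_coord_mul_mul (ξ : Fin d) (ha : DifferentiableAt ℝ a x)
    (hb : DifferentiableAt ℝ b x) :
    pd ν (fun y => y ξ * a y * b y) x
      = (if ξ = ν then a x * b x else 0) + x ξ * pd ν a x * b x + x ξ * a x * pd ν b x := by
  have hξ : DifferentiableAt ℝ (fun y : Fin d → ℝ => y ξ) x := differentiableAt_apply ξ x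
  rw [pd_mul ν (hξ.fun_mul ha) hb, pd_mul ν hξ ha, pd_coord]
  split_ifs <;> ring

theorem pd_sum_sum_coord_mul_mul {κ : Type*} [Fintype κ] (c : κ → Fin d → ℝ)
    {F : κ → (Fin d → ℝ) → ℝ} (ha : DifferentiableAt ℝ a x)
    (hF : ∀ σ, DifferentiableAt ℝ (F σ) x) :
    pd ν (fun y => ∑ ξ, ∑ σ, y ξ * c σ ξ * a y * F σ y) x
      = ∑ ξ, ∑ σ, c σ ξ * ((if ξ = ν then a x * F σ x else 0)
          + x ξ * pd ν a x * F σ x + x ξ * a x * pd ν (F σ) x) := by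
  have hterm (ξ : Fin d) (σ : κ) : DifferentiableAt ℝ (fun y => y ξ * a y * F σ y) x :=
    ((differentiableAt_apply ξ x).fun_mul ha).fun_mul (hF σ)
  have hV : (fun y => ∑ ξ, ∑ σ, y ξ * c σ ξ * a y * F σ y)
      = fun y => ∑ ξ, ∑ σ, c σ ξ * (y ξ * a y * F σ y) :=
    funext fun y => sum_congr rfl fun ξ _ => sum_congr rfl fun σ _ => by ring
  rw [hV, pd_fun_sum ν univ fun ξ _ => DifferentiableAt.fun_sum fun σ _ =>
    (hterm ξ σ).const_mul _]
  refine sum_congr rfl fun ξ _ => ?_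
  rw [pd_fun_sum_mul ν univ _ fun σ _ => hterm ξ σ]
  simp_rw [pd_coord_mul_mul ν ξ ha (hF _)]

theorem differentiable_pd (hf : ContDiff ℝ 2 a) : Differentiable ℝ (pd ν a) :=
  ((hf.fderiv_right le_rfl).differentiable one_ne_zero).clm_apply (differentiable_const _)

theorem pd_pd_comm (hf : ContDiff ℝ 2 a) (μ : Fin d) :
    pd μ (pd ν a) x = pd ν (pd μ a) x := by
  have hD : DifferentiableAt ℝ (fderiv ℝ a) x :=
    (hf.fderiv_right le_rfl).differentiable one_ne_zero x
  have hpd (κ τ : Fin d) : pd κ (pd τ a) x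
      = fderiv ℝ (fderiv ℝ a) x (Pi.single κ 1) (Pi.single τ 1) := by
    unfold pd
    rw [fderiv_clm_apply hD (differentiableAt_const _)]
    simp
  rw [hpd, hpd, (hf.contDiffAt.isSymmSndFDerivAt (by simp)).eq]

end PartialDerivative

/-- The Poisson bracket `{g,f}` equals a modular term plus a total divergence:
`Σ x_λ C^{μν}_λ ∂_μ g ∂_ν f = −g·Σ C^{νσ}_ν ∂_σ f + Σ_ν ∂_ν(Σ y_ξ C^{νσ}_ξ g ∂_σ f)`. -/
theorem poisson_bracket_as_divergence {d : ℕ} (C : Fin d → Fin d → Fin d → ℝ)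
    (hC : ∀ μ ν lam, C μ ν lam = - C ν μ lam)
    (g f : (Fin d → ℝ) → ℝ)
    (hg : ContDiff ℝ 1 g) (hf : ContDiff ℝ 2 f) :
    ∀ x, ∑ lam, ∑ μ, ∑ ν, x lam * C μ ν lam * pd μ g x * pd ν f x
      = - g x * (∑ ν, ∑ σ, C ν σ ν * pd σ f x)
        + ∑ ν, pd ν (fun y => ∑ ξ, ∑ σ, y ξ * C ν σ ξ * g y * pd σ f y) x := by
  intro x
  have hdiv (ν : Fin d) := pd_sum_sum_coord_mul_mul ν (fun σ ξ => C ν σ ξ)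
    (hg.differentiable one_ne_zero x) fun σ => differentiable_pd σ hf x
  have hmodular : ∑ ν, ∑ ξ, ∑ σ, C ν σ ξ * (if ξ = ν then g x * pd σ f x else 0)
      = g x * ∑ ν, ∑ σ, C ν σ ν * pd σ f x := by
    rw [mul_sum]
    refine sum_congr rfl fun ν _ => ?_
    rw [sum_comm, mul_sum]
    simp only [mul_ite, mul_zero, sum_ite_eq', mem_univ, if_true]
    exact sum_congr rfl fun σ _ => by ring
  have hhessian : ∑ ν, ∑ ξ, ∑ σ, C ν σ ξ * (x ξ * g x * pd ν (pd σ f) x) = 0 := by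
    rw [sum_comm]
    exact sum_eq_zero fun ξ _ => sum_sum_mul_eq_zero_of_antisymm_of_symm _
      (fun ν σ => hC ν σ ξ) fun ν σ => by rw [pd_pd_comm ν hf]
  have hbracket : ∑ ν, ∑ ξ, ∑ σ, C ν σ ξ * (x ξ * pd ν g x * pd σ f x)
      = ∑ lam, ∑ μ, ∑ ν, x lam * C μ ν lam * pd μ g x * pd ν f x := by
    rw [sum_comm]
    exact sum_congr rfl fun _ _ => sum_congr rfl fun _ _ => sum_congr rfl fun _ _ => by ring
  simp_rw [hdiv, mul_add, sum_add_distrib]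
  rw [hmodular, hhessian, hbracket]
  ring
end

section
/- Fix a real number κ ≠ 0. Let A : (Fin 4 → ℝ) → (Fin 4 → ℝ) and f : (Fin 4 → ℝ) → ℝ be differentiable. Define the κ-Minkowski Poisson bracket {g,h}(x) := κ⁻¹·Σ_{j=1}^{3} x_j·(∂_0 g(x)·∂_j h(x) − ∂_j g(x)·∂_0 h(x)), the matrix γκ(a) with entries γκ(a)^0_0 = 1, γκ(a)^0_j = −a_j/κ, γκ(a)^i_j = δ^i_j (i,j = 1,2,3), the function M(x) := exp(−3κ⁻¹·A_0(x)), and δA_μ(x) := Σ_ξ γκ(A(x))^ξ_μ·∂_ξ f(x) + {A_μ, f}(x) and δM(x) := −3κ⁻¹·M(x)·δA_0(x). Then for all x: δM(x) = −3κ⁻¹·M(x)·∂_0 f(x) + {M, f}(x). -/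
/-- The κ-Minkowski Poisson bracket
`{g,h}(x) = κ⁻¹ Σ_{j=1}^{3} x_j (∂_0 g ∂_j h − ∂_j g ∂_0 h)`. -/
noncomputable def pbK (κ : ℝ) (g h : (Fin 4 → ℝ) → ℝ) (x : Fin 4 → ℝ) : ℝ :=
  κ⁻¹ * ∑ j ∈ ({1, 2, 3} : Finset (Fin 4)), x j * (pd 0 g x * pd j h x - pd j g x * pd 0 h x)

/-- The matrix `γκ(a)` of the κ-Minkowski realization. -/
noncomputable def gammaK (κ : ℝ) (a : Fin 4 → ℝ) : Matrix (Fin 4) (Fin 4) ℝ :=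
  Matrix.of fun i j =>
    if i = 0 then (if j = 0 then 1 else -(a j) / κ) else (if i = j then 1 else 0)

/-- The κ-Minkowski integrating factor `M(x) = exp(−3κ⁻¹ A₀(x))`. -/
noncomputable def Mk (κ : ℝ) (A : (Fin 4 → ℝ) → (Fin 4 → ℝ)) (x : Fin 4 → ℝ) : ℝ :=
  Real.exp (-3 * κ⁻¹ * A x 0)

lemma pd_Mk (κ : ℝ) (A : (Fin 4 → ℝ) → (Fin 4 → ℝ)) (hA : Differentiable ℝ A)
    (μ : Fin 4) (x : Fin 4 → ℝ) :
    pd μ (Mk κ A) x = -3 * κ⁻¹ * Mk κ A x * pd μ (fun y => A y 0) x := by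
  have hg : Differentiable ℝ (fun y : Fin 4 → ℝ => A y 0) := differentiable_pi.mp hA 0
  have h1 : HasFDerivAt (fun y => -3 * κ⁻¹ * A y 0)
      ((-3 * κ⁻¹) • fderiv ℝ (fun y : Fin 4 → ℝ => A y 0) x) x :=
    ((hg x).hasFDerivAt).const_mul (-3 * κ⁻¹)
  have h2 := h1.exp
  unfold pd Mk
  rw [h2.fderiv]
  simp [ContinuousLinearMap.smul_apply, smul_eq_mul]
  ring

/-- Proposition 2 for the κ-Minkowski case: with
`δA_μ = Σ_ξ γκ(A)^ξ_μ ∂_ξ f + {A_μ,f}` and `δM = −3κ⁻¹ M δA₀`, one has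
`δM = −3κ⁻¹ M ∂_0 f + {M,f}`. -/
theorem kappa_integrating_factor_variation (κ : ℝ) (hκ : κ ≠ 0)
    (A : (Fin 4 → ℝ) → (Fin 4 → ℝ)) (f : (Fin 4 → ℝ) → ℝ)
    (hA : Differentiable ℝ A) (hf : Differentiable ℝ f)
    (δA : Fin 4 → (Fin 4 → ℝ) → ℝ) (δM : (Fin 4 → ℝ) → ℝ)
    (hδA : ∀ μ x, δA μ x
      = (∑ ξ, gammaK κ (A x) ξ μ * pd ξ f x) + pbK κ (fun y => A y μ) f x)
    (hδM : ∀ x, δM x = -3 * κ⁻¹ * Mk κ A x * δA 0 x) :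
    ∀ x, δM x = -3 * κ⁻¹ * Mk κ A x * pd 0 f x + pbK κ (Mk κ A) f x := by
  intro x
  rw [hδM x, hδA 0 x]
  have hsum : (∑ ξ, gammaK κ (A x) ξ 0 * pd ξ f x) = pd 0 f x := by
    rw [Fin.sum_univ_four]
    simp [gammaK]
  have hpb : pbK κ (Mk κ A) f x = -3 * κ⁻¹ * Mk κ A x * pbK κ (fun y => A y 0) f x := by
    unfold pbK
    have h : ∀ j ∈ ({1, 2, 3} : Finset (Fin 4)),
        x j * (pd 0 (Mk κ A) x * pd j f x - pd j (Mk κ A) x * pd 0 f x)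
        = (-3 * κ⁻¹ * Mk κ A x)
          * (x j * (pd 0 (fun y => A y 0) x * pd j f x
            - pd j (fun y => A y 0) x * pd 0 f x)) := by
      intro j _
      rw [pd_Mk κ A hA, pd_Mk κ A hA]
      ring
    rw [Finset.sum_congr rfl h, ← Finset.mul_sum]
    ring
  rw [hsum, hpb]
  ring
end
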